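/- Let H = ℓ²(ℕ, ℝ), let B(x,y) = −x₀·y₀ + Σ_{i≥1} x_i·y_i, Q(x) = B(x,x), and let 𝐇 = {x ∈ H : Q(x) = −1 and x₀ > 0} be the infinite-dimensional hyperboloid. Let I be a subset of ℕ∖{0} and let Y = {y ∈ 𝐇 : y_i = 0 for all i ∈ I}. Then for every x ∈ 𝐇: the vector y* = (x − Σ_{i∈I} x_i·e_i)/√(1 + Σ_{i∈I} x_i²) belongs to Y, the infimum inf_{y∈Y} arcosh(−B(x,y)) is attained at y*, and this infimum equals arcosh(√(x₀² − Σ_{i≥1, i∉I} x_i²)); equivalently, cosh of the hyperbolic distance from x to Y equals √(x₀² − Σ_{i≥1, i∉I} x_i²). -/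

import Mathlib

noncomputable section

/-- The real Hilbert space `ℓ²(ℕ, ℝ)` of square-summable real sequences. -/
abbrev ℓ2 : Type := lp (fun _ : ℕ => ℝ) 2

/-- The bilinear form of signature `(∞,1)`: `B(x,y) = -x₀y₀ + ∑_{i ≥ 1} xᵢyᵢ`. -/
def Bform (x y : ℓ2) : ℝ := -(x 0 * y 0) + ∑' i : {i : ℕ // 1 ≤ i}, x i * y i

/-- The quadratic form `Q(x) = B(x,x)`. -/
def Qform (x : ℓ2) : ℝ := Bform x x

/-- The infinite-dimensional hyperboloid `𝐇 = {x : Q(x) = -1, x₀ > 0}`. -/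
def Hyp : Set ℓ2 := {x | Qform x = -1 ∧ 0 < x 0}

/-- The inverse hyperbolic cosine, `arcosh t = log (t + √(t² - 1))`. -/
def arcosh (t : ℝ) : ℝ := Real.log (t + Real.sqrt (t ^ 2 - 1))

/-!
Let `z = x - ∑_{i ∈ I} xᵢ eᵢ` and `s = √(1 + ∑_{i ∈ I} xᵢ²)`. Every `y ∈ Y` vanishes on `I`, so
`B(x,y) = B(z,y)`, while `Q(z) = Q(x) - ∑_{i ∈ I} xᵢ² = -s²`. Hence `y* = z / s` lies on the
hyperboloid and `-B(x,y) = s · (-B(y*,y)) ≥ s`, with equality at `y = y*`, by the reverse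
Cauchy–Schwarz inequality `-B(u,v) ≥ 1` on `𝐇`. The latter holds because `v₀u - u₀v` has vanishing
`0`-th coordinate, so `0 ≤ Q(v₀u - u₀v) = -u₀² - v₀² - 2u₀v₀ B(u,v)`.
-/

open Set

theorem tsum_subtype_setOf {β : Type*} (p : β → Prop) (f : β → ℝ) :
    ∑' i : {i // p i}, f i = ∑' i, {i | p i}.indicator f i :=
  tsum_subtype {i | p i} f

theorem tsum_eq_add_tsum_one_le {f : ℕ → ℝ} (hf : Summable f) :
    ∑' i, f i = f 0 + ∑' i : {i // 1 ≤ i}, f i := by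
  have hcompl : {i : ℕ | 1 ≤ i}ᶜ = {0} := by ext i; simp
  rw [← hf.tsum_subtype_add_tsum_subtype_compl {i | 1 ≤ i}, tsum_congr_set_coe f hcompl,
    tsum_singleton, add_comm]
  rfl

-- `arcosh` is definitionally `Real.arcosh`.
theorem monotoneOn_arcosh : MonotoneOn arcosh (Ioi 0) :=
  Real.strictMonoOn_arcosh.monotoneOn

theorem IsLeast.arcosh_image {α : Type*} {f : α → ℝ} {S : Set α} {a : ℝ} (ha : 0 < a)
    (h : IsLeast (f '' S) a) : IsLeast ((fun y => arcosh (f y)) '' S) (arcosh a) := by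
  rw [← image_image arcosh f]
  exact (monotoneOn_arcosh.mono fun t ht => ha.trans_le (h.2 ht)).map_isLeast h

theorem Bform_eq_inner (x y : ℓ2) : Bform x y = inner ℝ x y - 2 * (x 0 * y 0) := by
  have hxy : Summable fun i => x i * y i := by
    simpa [mul_comm] using lp.summable_inner (𝕜 := ℝ) x y
  have hinner : inner ℝ x y = ∑' i, x i * y i := by
    simp only [lp.inner_eq_tsum, Real.inner_apply]
  rw [Bform, hinner, tsum_eq_add_tsum_one_le hxy]
  ring

theorem Bform_smul_left (c : ℝ) (x y : ℓ2) : Bform (c • x) y = c * Bform x y := by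
  simp only [Bform_eq_inner, real_inner_smul_left, lp.coeFn_smul, Pi.smul_apply, smul_eq_mul]
  ring

theorem Bform_smul_right (c : ℝ) (x y : ℓ2) : Bform x (c • y) = c * Bform x y := by
  simp only [Bform_eq_inner, real_inner_smul_right, lp.coeFn_smul, Pi.smul_apply, smul_eq_mul]
  ring

theorem Qform_smul (c : ℝ) (x : ℓ2) : Qform (c • x) = c ^ 2 * Qform x := by
  rw [Qform, Bform_smul_left, Bform_smul_right, Qform]
  ring

theorem Qform_smul_sub_smul (a b : ℝ) (u v : ℓ2) :
    Qform (a • u - b • v) = a ^ 2 * Qform u - 2 * a * b * Bform u v + b ^ 2 * Qform v := by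
  simp only [Qform, Bform_eq_inner, inner_sub_left, inner_sub_right, real_inner_smul_left,
    real_inner_smul_right, real_inner_comm u v, lp.coeFn_sub, lp.coeFn_smul, Pi.sub_apply,
    Pi.smul_apply, smul_eq_mul]
  ring

theorem neg_sq_le_Qform (w : ℓ2) : -w 0 ^ 2 ≤ Qform w := by
  rw [Qform, Bform, sq]
  exact le_add_of_nonneg_right (tsum_nonneg fun i => mul_self_nonneg _)

theorem one_le_neg_Bform {u v : ℓ2} (hu : u ∈ Hyp) (hv : v ∈ Hyp) : 1 ≤ -Bform u v := by
  have h := neg_sq_le_Qform (v 0 • u - u 0 • v)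
  simp only [Qform_smul_sub_smul, hu.1, hv.1, lp.coeFn_sub, lp.coeFn_smul, Pi.sub_apply,
    Pi.smul_apply, smul_eq_mul, mul_comm (v 0), sub_self] at h
  nlinarith [sq_nonneg (u 0 - v 0), mul_pos hu.2 hv.2]

section Normalize

variable {z : ℓ2} {s : ℝ}

theorem inv_smul_mem_Hyp (hs : 0 < s) (hz : Qform z = -s ^ 2) (hz0 : 0 < z 0) :
    s⁻¹ • z ∈ Hyp := by
  refine ⟨?_, ?_⟩
  · rw [Qform_smul, hz]
    field_simp
  · simpa using mul_pos (inv_pos.2 hs) hz0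

theorem neg_Bform_inv_smul_self (hs : 0 < s) (hz : Qform z = -s ^ 2) :
    -Bform z (s⁻¹ • z) = s := by
  rw [Bform_smul_right, ← Qform, hz]
  field_simp

theorem le_neg_Bform_of_mem_Hyp (hs : 0 < s) (hz : Qform z = -s ^ 2) (hz0 : 0 < z 0)
    {y : ℓ2} (hy : y ∈ Hyp) : s ≤ -Bform z y := by
  have h := one_le_neg_Bform (inv_smul_mem_Hyp hs hz hz0) hy
  have hzy : Bform z y = s * Bform (s⁻¹ • z) y := by
    rw [Bform_smul_left, mul_inv_cancel_left₀ hs.ne']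
  rw [hzy]
  nlinarith

end Normalize

theorem tsum_single_apply (I : Set ℕ) (x : ℓ2) (j : ℕ) :
    (∑' i : I, (lp.single 2 (i : ℕ) (x i) : ℓ2)) j = I.indicator x j := by
  have hsum : Summable fun i : I => (lp.single 2 (i : ℕ) (x i) : ℓ2) :=
    (lp.hasSum_single (by norm_num) x).summable.subtype I
  change lp.evalCLM ℝ (fun _ : ℕ => ℝ) 2 j _ = _
  rw [ContinuousLinearMap.map_tsum _ hsum]
  change ∑' i : I, (lp.single 2 (i : ℕ) (x i) : ℓ2) j = _
  simp only [lp.coeFn_single]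
  rw [tsum_subtype I (fun i => Pi.single (M := fun _ => ℝ) i (x i) j), tsum_eq_single j]
  · by_cases hj : j ∈ I <;> simp [hj]
  · intro i hij
    simp [Pi.single_apply, hij.symm]

def eraseCoords (I : Set ℕ) (x : ℓ2) : ℓ2 := x - ∑' i : I, x i • lp.single 2 (i : ℕ) (1 : ℝ)

section EraseCoords

variable {I : Set ℕ}

theorem eraseCoords_apply (x : ℓ2) (j : ℕ) : eraseCoords I x j = Iᶜ.indicator x j := by
  have hsingle : ∀ i : ℕ, x i • lp.single 2 i (1 : ℝ) = (lp.single 2 i (x i) : ℓ2) := fun i => by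
    rw [← lp.single_smul, smul_eq_mul, mul_one]
  simp only [eraseCoords, hsingle, lp.coeFn_sub, Pi.sub_apply, tsum_single_apply]
  by_cases hj : j ∈ I <;> simp [hj]

theorem eraseCoords_apply_zero (hI : I ⊆ {i | i ≠ 0}) (x : ℓ2) : eraseCoords I x 0 = x 0 := by
  rw [eraseCoords_apply, indicator_of_mem (show (0 : ℕ) ∈ Iᶜ from fun h => hI h rfl)]

theorem Bform_eraseCoords_left (x : ℓ2) {y : ℓ2} (hy : ∀ i ∈ I, y i = 0) :
    Bform (eraseCoords I x) y = Bform x y := by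
  have h : ∀ i, eraseCoords I x i * y i = x i * y i := fun i => by
    by_cases hi : i ∈ I <;> simp [eraseCoords_apply, hi, hy]
  simp only [Bform, h]

theorem summable_sq (x : ℓ2) : Summable fun i => x i ^ 2 := by
  simpa [sq] using lp.summable_inner (𝕜 := ℝ) x x

theorem Qform_eq_tsum_indicator (x : ℓ2) :
    Qform x = -x 0 ^ 2 + ∑' i, {i | 1 ≤ i}.indicator (fun i => x i ^ 2) i := by
  rw [Qform, Bform, tsum_subtype_setOf (fun i => 1 ≤ i) (fun i => x i * x i)]
  simp only [← sq]

theorem Qform_eq_neg_sq_add_tsum_add_tsum (hI : I ⊆ {i | i ≠ 0}) (x : ℓ2) :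
    Qform x = -x 0 ^ 2 + (∑' i : I, x i ^ 2 + ∑' i : {i // 1 ≤ i ∧ i ∉ I}, x i ^ 2) := by
  rw [Qform_eq_tsum_indicator, tsum_subtype I (fun i => x i ^ 2),
    tsum_subtype_setOf (fun i => 1 ≤ i ∧ i ∉ I) (fun i => x i ^ 2),
    ← ((summable_sq x).indicator _).tsum_add ((summable_sq x).indicator _)]
  congr 1
  refine tsum_congr fun i => ?_
  by_cases h2 : i ∈ I
  · simp [h2, Nat.one_le_iff_ne_zero.2 (hI h2)]
  · by_cases h1 : 1 ≤ i <;> simp [h1, h2]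

theorem Qform_eraseCoords (hI : I ⊆ {i | i ≠ 0}) (x : ℓ2) :
    Qform (eraseCoords I x) = -x 0 ^ 2 + ∑' i : {i // 1 ≤ i ∧ i ∉ I}, x i ^ 2 := by
  rw [Qform_eq_tsum_indicator, tsum_subtype_setOf (fun i => 1 ≤ i ∧ i ∉ I) (fun i => x i ^ 2),
    eraseCoords_apply_zero hI]
  congr 1
  refine tsum_congr fun i => ?_
  by_cases h1 : 1 ≤ i <;> by_cases h2 : i ∈ I <;> simp [eraseCoords_apply, h1, h2]

end EraseCoords


/-- Distance to the totally geodesic subspace `Y = {y ∈ 𝐇 : yᵢ = 0 ∀ i ∈ I}` of the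
infinite-dimensional hyperboloid: for `x ∈ 𝐇`, the point
`y* = (x - ∑_{i ∈ I} xᵢ eᵢ) / √(1 + ∑_{i ∈ I} xᵢ²)` lies in `Y`, realizes the infimum of
the hyperbolic distance `arcosh (-B(x,·))` on `Y`, and this infimum equals
`arcosh √(x₀² - ∑_{i ≥ 1, i ∉ I} xᵢ²)`. -/
theorem dist_to_totally_geodesic_subspace
    (I : Set ℕ) (hI : I ⊆ {i : ℕ | i ≠ 0}) (x : ℓ2) (hx : x ∈ Hyp)
    (Y : Set ℓ2) (hY : Y = {y : ℓ2 | y ∈ Hyp ∧ ∀ i ∈ I, y i = 0})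
    (ystar : ℓ2)
    (hystar : ystar =
      (Real.sqrt (1 + ∑' i : I, (x i) ^ 2))⁻¹ •
        (x - ∑' i : I, (x i) • lp.single 2 (i : ℕ) (1 : ℝ))) :
    ystar ∈ Y ∧
    IsLeast ((fun y => arcosh (-(Bform x y))) '' Y) (arcosh (-(Bform x ystar))) ∧
    arcosh (-(Bform x ystar)) =
      arcosh (Real.sqrt ((x 0) ^ 2 - ∑' i : {i : ℕ // 1 ≤ i ∧ i ∉ I}, (x i) ^ 2)) := by
  subst hY
  set T := ∑' i : {i : ℕ // 1 ≤ i ∧ i ∉ I}, x i ^ 2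
  set s := Real.sqrt (1 + ∑' i : I, x i ^ 2)
  have hs : 0 < s := Real.sqrt_pos.2 (by positivity)
  have hST : x 0 ^ 2 - T = s ^ 2 := by
    rw [Real.sq_sqrt (by positivity)]
    linarith [Qform_eq_neg_sq_add_tsum_add_tsum hI x, hx.1]
  have hzQ : Qform (eraseCoords I x) = -s ^ 2 := by
    rw [Qform_eraseCoords hI, ← hST]
    ring
  have hz0 : 0 < eraseCoords I x 0 := eraseCoords_apply_zero hI x ▸ hx.2
  have hystar' : ystar = s⁻¹ • eraseCoords I x := hystar
  have hmem : ystar ∈ {y | y ∈ Hyp ∧ ∀ i ∈ I, y i = 0} := by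
    refine ⟨hystar' ▸ inv_smul_mem_Hyp hs hzQ hz0, fun i hi => ?_⟩
    simp [hystar', eraseCoords_apply, hi]
  have hval : -Bform x ystar = s := by
    rw [← Bform_eraseCoords_left x hmem.2, hystar']
    exact neg_Bform_inv_smul_self hs hzQ
  have hleast : IsLeast ((fun y => -Bform x y) '' {y | y ∈ Hyp ∧ ∀ i ∈ I, y i = 0}) s := by
    refine ⟨⟨ystar, hmem, hval⟩, ?_⟩
    rintro _ ⟨y, ⟨hy, hyI⟩, rfl⟩
    show s ≤ -Bform x y
    rw [← Bform_eraseCoords_left x hyI]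
    exact le_neg_Bform_of_mem_Hyp hs hzQ hz0 hy
  refine ⟨hmem, hval ▸ hleast.arcosh_image hs, by rw [hval, hST, Real.sqrt_sq hs.le]⟩
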